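/- Let H ∈ ℝ^{n×n} be symmetric positive definite, f ∈ ℝⁿ, A ∈ ℝ^{m×n}, b ∈ ℝᵐ. If x⋆ is a global minimizer of the primal QP (i.e. A x⋆ ≤ b and J(x⋆) ≤ J(x) for all x with A x ≤ b), then there exists λ⋆ ∈ ℝᵐ such that (x⋆, λ⋆) satisfies the KKT conditions. (No constraint qualification is needed because the constraints are affine.) -/

import Mathlib

/-!
At a minimizer `x⋆`, moving along any direction `d` that keeps the active constraints satisfied
(`Aᵢ d ≤ 0` whenever `(A x⋆)ᵢ = bᵢ`) stays feasible for small steps, so the directional derivative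
`(H x⋆ + f) ⬝ d` is nonnegative. Farkas' lemma, proved by eliminating one constraint at a time
with an oblique projection, turns this into `-(H x⋆ + f) = Aᵀ λ` with `λ ≥ 0` supported on the
active constraints, which is exactly stationarity, dual feasibility and complementary slackness.
-/

open Matrix Finset Filter Topology

section ObliqueProjection

variable {κ 𝕜 : Type*} [Fintype κ] [Field 𝕜]

/-- The projection onto the hyperplane `d ⬝ᵥ v = 0` along the direction `u`. -/
def obliqueProj (u d : κ → 𝕜) : (κ → 𝕜) →ₗ[𝕜] κ → 𝕜 where
  toFun v := v - ((v ⬝ᵥ d) / (u ⬝ᵥ d)) • u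
  map_add' v w := by
    simp only [add_dotProduct, add_div, add_smul]
    abel
  map_smul' c v := by
    simp only [smul_dotProduct, smul_eq_mul, mul_div_assoc, smul_sub, smul_smul, RingHom.id_apply]

lemma obliqueProj_apply (u d v : κ → 𝕜) :
    obliqueProj u d v = v - ((v ⬝ᵥ d) / (u ⬝ᵥ d)) • u := rfl

lemma obliqueProj_dotProduct (u d v w : κ → 𝕜) :
    obliqueProj u d v ⬝ᵥ w = v ⬝ᵥ obliqueProj d u w := by
  simp only [obliqueProj_apply, sub_dotProduct, dotProduct_sub, smul_dotProduct,
    dotProduct_smul, smul_eq_mul, dotProduct_comm u d, dotProduct_comm w u, dotProduct_comm v d]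
  ring

lemma obliqueProj_self {u d : κ → 𝕜} (h : u ⬝ᵥ d ≠ 0) : obliqueProj u d u = 0 := by
  rw [obliqueProj_apply, div_self h, one_smul, sub_self]

lemma eq_smul_of_obliqueProj_eq_zero {u d v : κ → 𝕜} (h : obliqueProj u d v = 0) :
    v = ((v ⬝ᵥ d) / (u ⬝ᵥ d)) • u :=
  sub_eq_zero.mp h

end ObliqueProjection

section Farkas

variable {ι κ 𝕜 : Type*} [Fintype κ] [Field 𝕜] [LinearOrder 𝕜] [IsStrictOrderedRing 𝕜]

lemma farkas_insert_step [DecidableEq ι] {a : ι → κ → 𝕜} {s : Finset ι} {j : ι} (hj : j ∉ s)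
    {g d₀ : κ → 𝕜} (h : ∀ d, (∀ i ∈ insert j s, a i ⬝ᵥ d ≤ 0) → g ⬝ᵥ d ≤ 0)
    (hd₀ : ∀ i ∈ s, a i ⬝ᵥ d₀ ≤ 0) (hgd₀ : 0 < g ⬝ᵥ d₀)
    (ih : ∀ (a : ι → κ → 𝕜) (g : κ → 𝕜), (∀ d, (∀ i ∈ s, a i ⬝ᵥ d ≤ 0) → g ⬝ᵥ d ≤ 0) →
      ∃ μ : ι → 𝕜, 0 ≤ μ ∧ (∀ i ∉ s, μ i = 0) ∧ g = ∑ i ∈ s, μ i • a i) :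
    ∃ μ : ι → 𝕜, 0 ≤ μ ∧ (∀ i ∉ insert j s, μ i = 0) ∧ g = ∑ i ∈ insert j s, μ i • a i := by
  have hD : 0 < a j ⬝ᵥ d₀ := by
    by_contra! hle
    exact hgd₀.not_ge (h d₀ (Finset.forall_mem_insert _ _ _ |>.mpr ⟨hle, hd₀⟩))
  have hP : ∀ d, (∀ i ∈ s, obliqueProj (a j) d₀ (a i) ⬝ᵥ d ≤ 0) →
      obliqueProj (a j) d₀ g ⬝ᵥ d ≤ 0 := by
    intro d hd
    simp only [obliqueProj_dotProduct] at hd ⊢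
    refine h _ (Finset.forall_mem_insert _ _ _ |>.mpr ⟨?_, hd⟩)
    rw [← obliqueProj_dotProduct, obliqueProj_self hD.ne', zero_dotProduct]
  obtain ⟨μ, hμ, hμs, hμg⟩ := ih (obliqueProj (a j) d₀ ∘ a) _ hP
  set r := g - ∑ i ∈ s, μ i • a i
  have hr : r = ((r ⬝ᵥ d₀) / (a j ⬝ᵥ d₀)) • a j := by
    refine eq_smul_of_obliqueProj_eq_zero ?_
    rw [map_sub, map_sum, hμg]
    simp only [map_smul, Function.comp_apply, sub_self]
  have hc : 0 ≤ (r ⬝ᵥ d₀) / (a j ⬝ᵥ d₀) := by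
    refine div_nonneg ?_ hD.le
    have : ∑ i ∈ s, μ i * (a i ⬝ᵥ d₀) ≤ 0 :=
      Finset.sum_nonpos fun i hi => mul_nonpos_of_nonneg_of_nonpos (hμ i) (hd₀ i hi)
    simp only [r, sub_dotProduct, sum_dotProduct, smul_dotProduct, smul_eq_mul]
    linarith
  refine ⟨Function.update μ j ((r ⬝ᵥ d₀) / (a j ⬝ᵥ d₀)), ?_, ?_, ?_⟩
  · intro i
    rcases eq_or_ne i j with rfl | hij
    · simpa using hc
    · simpa [hij] using hμ i
  · intro i hi
    rw [Finset.mem_insert, not_or] at hi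
    rw [Function.update_of_ne hi.1, hμs i hi.2]
  · rw [Finset.sum_insert hj, Function.update_self,
      Finset.sum_congr rfl fun i hi => by rw [Function.update_of_ne (ne_of_mem_of_not_mem hi hj)],
      ← hr, sub_add_cancel]

theorem Finset.exists_nonneg_sum_smul_eq_of_dotProduct_nonpos (s : Finset ι) (a : ι → κ → 𝕜)
    (g : κ → 𝕜) (h : ∀ d, (∀ i ∈ s, a i ⬝ᵥ d ≤ 0) → g ⬝ᵥ d ≤ 0) :
    ∃ μ : ι → 𝕜, 0 ≤ μ ∧ (∀ i ∉ s, μ i = 0) ∧ g = ∑ i ∈ s, μ i • a i := by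
  classical
  induction s using Finset.induction_on generalizing a g with
  | empty =>
    have hg : g = 0 := dotProduct_self_eq_zero.mp <|
      (h g (by simp)).antisymm (Finset.sum_nonneg fun i _ => mul_self_nonneg (g i))
    exact ⟨0, le_rfl, fun _ _ => rfl, by simp [hg]⟩
  | insert j s hj ih =>
    by_cases hs : ∀ d, (∀ i ∈ s, a i ⬝ᵥ d ≤ 0) → g ⬝ᵥ d ≤ 0
    · obtain ⟨μ, hμ, hμs, hμg⟩ := ih a g hs
      exact ⟨μ, hμ, fun i hi => hμs i (by simp_all), by simp [Finset.sum_insert hj, hμs j hj, hμg]⟩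
    · push Not at hs
      obtain ⟨d₀, hd₀, hgd₀⟩ := hs
      exact farkas_insert_step hj h hd₀ hgd₀ ih

end Farkas

lemma Matrix.IsSymm.dotProduct_mulVec_add_smul {κ R : Type*} [Fintype κ] [CommRing R]
    {H : Matrix κ κ R} (hH : H.IsSymm) (x d : κ → R) (t : R) :
    (x + t • d) ⬝ᵥ H *ᵥ (x + t • d) =
      x ⬝ᵥ H *ᵥ x + 2 * t * (H *ᵥ x ⬝ᵥ d) + t ^ 2 * (d ⬝ᵥ H *ᵥ d) := by
  have hsymm : x ⬝ᵥ H *ᵥ d = H *ᵥ x ⬝ᵥ d := by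
    rw [dotProduct_mulVec, ← mulVec_transpose, hH.eq]
  simp only [mulVec_add, mulVec_smul, add_dotProduct, dotProduct_add, smul_dotProduct,
    dotProduct_smul, smul_eq_mul, hsymm, dotProduct_comm d (H *ᵥ x)]
  ring

variable {ι κ : Type*} [Fintype ι] [Fintype κ]

noncomputable def qpObjective (H : Matrix κ κ ℝ) (f x : κ → ℝ) : ℝ :=
  1 / 2 * (x ⬝ᵥ H *ᵥ x) + f ⬝ᵥ x

lemma qpObjective_add_smul {H : Matrix κ κ ℝ} (hH : H.IsSymm) (f x d : κ → ℝ) (t : ℝ) :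
    qpObjective H f (x + t • d) =
      qpObjective H f x + t * ((H *ᵥ x + f) ⬝ᵥ d) + t ^ 2 / 2 * (d ⬝ᵥ H *ᵥ d) := by
  simp only [qpObjective, hH.dotProduct_mulVec_add_smul, dotProduct_add, dotProduct_smul,
    smul_eq_mul, add_dotProduct, dotProduct_comm f d]
  ring

lemma nonneg_of_eventually_nonneg_mul_add_sq_mul {a c : ℝ}
    (h : ∀ᶠ t in 𝓝[>] 0, 0 ≤ t * a + t ^ 2 * c) : 0 ≤ a := by
  have hdiv : ∀ᶠ t in 𝓝[>] 0, 0 ≤ a + t * c :=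
    (h.and self_mem_nhdsWithin).mono fun t ⟨ht, hpos⟩ =>
      (mul_nonneg_iff_of_pos_left (show (0 : ℝ) < t from hpos)).mp (by linear_combination ht)
  have hlim : Tendsto (fun t => a + t * c) (𝓝[>] 0) (𝓝 a) :=
    ((continuous_const.add (continuous_id.mul continuous_const)).tendsto' 0 a (by simp)).mono_left
      nhdsWithin_le_nhds
  exact ge_of_tendsto hlim hdiv

lemma eventually_mulVec_add_smul_le {A : Matrix ι κ ℝ} {b : ι → ℝ} {x d : κ → ℝ} (hx : A *ᵥ x ≤ b)
    (hd : ∀ i, (A *ᵥ x) i = b i → (A *ᵥ d) i ≤ 0) :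
    ∀ᶠ t in 𝓝[>] (0 : ℝ), A *ᵥ (x + t • d) ≤ b := by
  simp only [Pi.le_def, mulVec_add, mulVec_smul, Pi.add_apply, Pi.smul_apply, smul_eq_mul]
  refine eventually_all.mpr fun i => ?_
  rcases (hx i).eq_or_lt with hact | hslack
  · filter_upwards [self_mem_nhdsWithin] with t (ht : 0 < t)
    nlinarith [hd i hact]
  · have hlim : Tendsto (fun t : ℝ => (A *ᵥ x) i + t * (A *ᵥ d) i) (𝓝 0) (𝓝 ((A *ᵥ x) i)) :=
      (continuous_const.add (continuous_id.mul continuous_const)).tendsto' 0 _ (by simp)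
    exact nhdsWithin_le_nhds ((hlim.eventually (gt_mem_nhds hslack)).mono fun _ => le_of_lt)

lemma IsMinOn.qpObjective_gradient_dotProduct_nonneg {H : Matrix κ κ ℝ} (hH : H.IsSymm)
    {f : κ → ℝ} {A : Matrix ι κ ℝ} {b : ι → ℝ} {x : κ → ℝ} (hx : A *ᵥ x ≤ b)
    (hmin : IsMinOn (qpObjective H f) {y | A *ᵥ y ≤ b} x) {d : κ → ℝ}
    (hd : ∀ i, (A *ᵥ x) i = b i → (A *ᵥ d) i ≤ 0) :
    0 ≤ (H *ᵥ x + f) ⬝ᵥ d := by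
  refine nonneg_of_eventually_nonneg_mul_add_sq_mul (c := (d ⬝ᵥ H *ᵥ d) / 2) ?_
  filter_upwards [eventually_mulVec_add_smul_le hx hd] with t ht
  have : qpObjective H f x ≤ qpObjective H f (x + t • d) := hmin ht
  rw [qpObjective_add_smul hH] at this
  linarith

/-- If `x⋆` is a global minimizer of the primal QP (with `H`
symmetric positive definite and affine constraints `Ax ≤ b`), then there exists a
multiplier `λ⋆ ∈ ℝᵐ` such that `(x⋆, λ⋆)` satisfies the KKT conditions. -/
theorem qp_minimizer_implies_kkt
    (n m : ℕ) (H : Matrix (Fin n) (Fin n) ℝ) (hH : H.PosDef)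
    (f : Fin n → ℝ) (A : Matrix (Fin m) (Fin n) ℝ) (b : Fin m → ℝ)
    (J : (Fin n → ℝ) → ℝ)
    (hJ : J = fun x => (1 / 2) * (x ⬝ᵥ H.mulVec x) + f ⬝ᵥ x)
    (xstar : Fin n → ℝ)
    (hfeas : A.mulVec xstar ≤ b)
    (hmin : ∀ x : Fin n → ℝ, A.mulVec x ≤ b → J xstar ≤ J x) :
    ∃ lamstar : Fin m → ℝ,
      H.mulVec xstar + Aᵀ.mulVec lamstar = -f ∧
      A.mulVec xstar ≤ b ∧
      0 ≤ lamstar ∧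
      ∀ i : Fin m, lamstar i * (A.mulVec xstar i - b i) = 0 := by
  subst hJ
  have hsymm : H.IsSymm := isHermitian_iff_isSymm.mp hH.isHermitian
  set active := univ.filter fun i => (A *ᵥ xstar) i = b i
  have hcone : ∀ d, (∀ i ∈ active, A i ⬝ᵥ d ≤ 0) → -(H *ᵥ xstar + f) ⬝ᵥ d ≤ 0 := fun d hd =>
    neg_dotProduct _ d ▸ neg_nonpos.mpr <|
      (isMinOn_iff.mpr hmin).qpObjective_gradient_dotProduct_nonneg hsymm hfeas
        fun i hi => hd i (mem_filter.mpr ⟨mem_univ i, hi⟩)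
  obtain ⟨μ, hμ, hμ_active, hμ_sum⟩ :=
    active.exists_nonneg_sum_smul_eq_of_dotProduct_nonpos (fun i => A i) _ hcone
  have hstat : Aᵀ *ᵥ μ = -(H *ᵥ xstar + f) := by
    rw [mulVec_transpose, vecMul_eq_sum, hμ_sum]
    exact (sum_subset (subset_univ active) fun i _ hi => by rw [hμ_active i hi, zero_smul]).symm
  refine ⟨μ, by rw [hstat]; abel, hfeas, hμ, fun i => ?_⟩
  by_cases hi : i ∈ active
  · rw [(mem_filter.mp hi).2, sub_self, mul_zero]
  · rw [hμ_active i hi, zero_mul]
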